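/- arXiv:1709.07929 — 4 statements merged into one kernel-verified Lean document; each statement's English description precedes it below -/
import Mathlib

section
/- Let (X, σ) be a support data for a triangulated category T such that X is a noetherian sober space and the maps f_σ and g_σ are mutually inverse bijections between thick subcategories of T and specialization-closed subsets of X. Then for any closed subset Z of X, there exists an object M of T with σ(M) = Z. -/
universe v u

open CategoryTheory Limits Pretriangulated

variable (C : Type u) [Category.{v} C] [Preadditive C] [HasZeroObject C]
  [HasBinaryBiproducts C] [HasShift C ℤ]
  [∀ n : ℤ, (CategoryTheory.shiftFunctor C n).Additive] [Pretriangulated C]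

/-- A thick subcategory of a triangulated category: a nonempty (contains the zero
objects) full additive subcategory, closed under isomorphisms, shifts, extensions
and direct summands, recorded via its set of objects. -/
structure ThickSubcat where
  set : Set C
  zero_mem : ∀ M : C, IsZero M → M ∈ set
  iso_mem : ∀ {M N : C}, (M ≅ N) → M ∈ set → N ∈ set
  shift_mem : ∀ (M : C) (n : ℤ), M ∈ set → (shiftFunctor C n).obj M ∈ set
  ext_mem : ∀ T : Triangle C, (T ∈ distTriang C) → T.obj₁ ∈ set → T.obj₃ ∈ set →
    T.obj₂ ∈ set
  summand_mem : ∀ M N : C, (M ⊞ N) ∈ set → M ∈ set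

/-- A support data `(X, σ)` for a triangulated category `C`: `σ` assigns to each
object a closed subset of `X` such that `σ(0) = ∅`, `σ(ΣⁿM) = σ(M)`,
`σ(M ⊕ N) = σ(M) ∪ σ(N)`, and `σ(M) ⊆ σ(L) ∪ σ(N)` for each distinguished
triangle `L → M → N → ΣL`. -/
structure SupportData (X : Type*) [TopologicalSpace X] where
  σ : C → Set X
  isClosed_σ : ∀ M : C, IsClosed (σ M)
  σ_zero : ∀ M : C, IsZero M → σ M = ∅
  σ_shift : ∀ (M : C) (n : ℤ), σ ((shiftFunctor C n).obj M) = σ M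
  σ_sum : ∀ M N : C, σ (M ⊞ N) = σ M ∪ σ N
  σ_triangle : ∀ T : Triangle C, (T ∈ distTriang C) → σ T.obj₂ ⊆ σ T.obj₁ ∪ σ T.obj₃

variable {C}

/-- `f_σ(𝒳) = ⋃_{M ∈ 𝒳} σ(M)`. -/
def SupportData.f {X : Type*} [TopologicalSpace X] (sd : SupportData C X)
    (S : Set C) : Set X := ⋃ M ∈ S, sd.σ M

/-- `g_σ(W) = {M : σ(M) ⊆ W}`. -/
def SupportData.g {X : Type*} [TopologicalSpace X] (sd : SupportData C X)
    (W : Set X) : Set C := {M : C | sd.σ M ⊆ W}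

/-- A subset of a topological space is specialization-closed if it contains the
closure of each of its points. -/
def SpclClosed {X : Type*} [TopologicalSpace X] (W : Set X) : Prop :=
  ∀ x ∈ W, closure {x} ⊆ W

variable (C)

/-- The smallest thick subcategory (as a set of objects) containing a given set. -/
def thickClosure (S : Set C) : Set C :=
  ⋂₀ {U : Set C | (∃ T : ThickSubcat C, T.set = U) ∧ S ⊆ U}

variable {C}

/-
Every closed set is a finite union of irreducible closed sets, which in a sober space are
point closures `closure {x}`. Since `closure {x}` is specialization-closed, `f_σ g_σ = id`
puts `x` in `σ(M)` for some `M` with `σ(M) ⊆ closure {x}`, so `σ(M) = closure {x}`; a finite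
direct sum of such objects then realizes the union.
-/

theorem IsClosed.spclClosed {X : Type*} [TopologicalSpace X] {Z : Set X} (hZ : IsClosed Z) :
    SpclClosed Z :=
  fun _ hx => hZ.closure_subset_iff.mpr (Set.singleton_subset_iff.mpr hx)

namespace SupportData

variable {X : Type*} [TopologicalSpace X] (sd : SupportData C X)

theorem exists_σ_eq_closure_singleton {x : X}
    (hx : sd.f (sd.g (closure {x})) = closure {x}) : ∃ M : C, sd.σ M = closure {x} := by
  have hx_mem : x ∈ sd.f (sd.g (closure {x})) := by
    rw [hx]; exact subset_closure rfl
  obtain ⟨M, hM, hxM⟩ := Set.mem_iUnion₂.mp hx_mem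
  exact ⟨M, hM.antisymm ((sd.isClosed_σ M).closure_subset_iff.mpr
    (Set.singleton_subset_iff.mpr hxM))⟩

open ZeroObject in
theorem exists_σ_eq_sUnion {S : Set (Set X)} (hS : S.Finite)
    (h : ∀ t ∈ S, ∃ M : C, sd.σ M = t) : ∃ M : C, sd.σ M = ⋃₀ S := by
  induction S, hS using Set.Finite.induction_on with
  | empty =>
    exact ⟨0, by simpa using sd.σ_zero 0 (isZero_zero C)⟩
  | @insert t S _ _ ih =>
    obtain ⟨M, hM⟩ := ih fun u hu => h u (Set.mem_insert_of_mem t hu)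
    obtain ⟨N, hN⟩ := h t (Set.mem_insert t S)
    exact ⟨N ⊞ M, by rw [sd.σ_sum, hN, hM, Set.sUnion_insert]⟩

end SupportData

theorem stmt1_general {X : Type*} [TopologicalSpace X] [TopologicalSpace.NoetherianSpace X]
    [QuasiSober X] (sd : SupportData C X)
    (h2 : ∀ W : Set X, SpclClosed W → sd.f (sd.g W) = W) :
    ∀ Z : Set X, IsClosed Z → ∃ M : C, sd.σ M = Z := by
  intro Z hZ
  obtain ⟨S, hS, hS_closed, hS_irred, rfl⟩ :=
    TopologicalSpace.NoetherianSpace.exists_finite_set_isClosed_irreducible hZ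
  refine sd.exists_σ_eq_sUnion hS fun t ht => ?_
  obtain ⟨x, rfl⟩ := QuasiSober.sober (hS_irred t ht) (hS_closed t ht)
  exact sd.exists_σ_eq_closure_singleton (h2 _ isClosed_closure.spclClosed)

/-- Realization: for a classifying support data, every closed subset is the
support of some object. -/
theorem stmt1 {X : Type*} [TopologicalSpace X] [TopologicalSpace.NoetherianSpace X]
    [QuasiSober X] [T0Space X] (sd : SupportData C X)
    (h1 : ∀ T : ThickSubcat C, sd.g (sd.f T.set) = T.set)
    (h2 : ∀ W : Set X, SpclClosed W → sd.f (sd.g W) = W) :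
    ∀ Z : Set X, IsClosed Z → ∃ M : C, sd.σ M = Z :=
  stmt1_general sd h2
end

section
/- Let T be a tensor triangulated category in which every object is strongly dualizable, and let M be an object with M^{⊗n} ≅ 0 for some n ≥ 1, and such that M^{⊗i} belongs to the thick tensor ideal generated by M^{⊗2i} for every i ≥ 1. Then M ≅ 0. -/
universe v u

open CategoryTheory Limits Pretriangulated

variable (C : Type u) [Category.{v} C] [Preadditive C] [HasZeroObject C]
  [HasBinaryBiproducts C] [HasShift C ℤ]
  [∀ n : ℤ, (CategoryTheory.shiftFunctor C n).Additive] [Pretriangulated C]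

variable {C}

variable (C)

open MonoidalCategory

variable [MonoidalCategory C] [SymmetricCategory C]

/-- `n`-fold tensor power of an object, with `M^{⊗0} = 𝟙` and `M^{⊗(n+1)} = M^{⊗n} ⊗ M`. -/
def tensorPow (M : C) : ℕ → C
  | 0 => 𝟙_ C
  | n + 1 => tensorPow M n ⊗ M

/-- The smallest thick tensor ideal (as a set of objects) containing a given set. -/
def thickTensorIdealClosure (S : Set C) : Set C :=
  ⋂₀ {U : Set C | (∃ T : ThickSubcat C, T.set = U) ∧
      (∀ M ∈ U, ∀ N : C, (M ⊗ N) ∈ U) ∧ S ⊆ U}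

/-! Tensoring with a dualizable object is a left adjoint, so it kills zero objects; hence the
zero objects form a thick tensor ideal, and a thick tensor ideal generated by zero objects is
zero. Thus `M^{⊗2i} ≅ 0` forces `M^{⊗i} ≅ 0`, and halving down from `M^{⊗2ⁿ} ≅ 0` reaches
`M^{⊗1} ≅ M`. -/

theorem Nat.of_two_mul_of_two_pow {P : ℕ → Prop} (hP : ∀ i, 1 ≤ i → P (2 * i) → P i) :
    ∀ k, P (2 ^ k) → P 1
  | 0, h => h
  | k + 1, h => of_two_mul_of_two_pow hP k <| hP _ k.one_le_two_pow (by rwa [← pow_succ'])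

theorem isZero_tensor_of_isZero_left {D : Type*} [Category D] [HasZeroMorphisms D]
    [MonoidalCategory D] {X : D} (hX : IsZero X) (Y : D) [HasRightDual Y] : IsZero (X ⊗ Y) :=
  have : (tensorRight Y).IsLeftAdjoint := (tensorRightAdjunction Y Yᘁ).isLeftAdjoint
  (tensorRight Y).map_isZero hX

def ThickSubcat.zero : ThickSubcat C where
  set := {X | IsZero X}
  zero_mem _ hX := hX
  iso_mem e hX := hX.of_iso e.symm
  shift_mem _ n hX := (shiftFunctor C n).map_isZero hX
  ext_mem T hT h₁ h₃ := T.isZero₂_of_isZero₁₃ hT h₁ h₃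
  summand_mem X Y h := ((biprod_isZero_iff X Y).1 h).1

variable {C} in
omit [SymmetricCategory C] in
theorem isZero_of_mem_thickTensorIdealClosure [RightRigidCategory C] {S : Set C}
    (hS : ∀ X ∈ S, IsZero X) {Y : C} (hY : Y ∈ thickTensorIdealClosure C S) : IsZero Y :=
  hY {X | IsZero X}
    ⟨⟨ThickSubcat.zero C, rfl⟩, fun _ hX Z => isZero_tensor_of_isZero_left hX Z, hS⟩

theorem isZero_tensorPow_of_le {D : Type*} [Category D] [HasZeroMorphisms D]
    [MonoidalCategory D] {M : D} [HasRightDual M] {n : ℕ} (hn : IsZero (tensorPow D M n)) :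
    ∀ {k}, n ≤ k → IsZero (tensorPow D M k) := by
  intro k hk
  induction k, hk using Nat.le_induction with
  | base => exact hn
  | succ k _ ih => exact isZero_tensor_of_isZero_left ih M

theorem stmt6 [RigidCategory C] (M : C) (n : ℕ)
    (h0 : IsZero (tensorPow C M n))
    (h : ∀ i : ℕ, 1 ≤ i →
      tensorPow C M i ∈ thickTensorIdealClosure C {tensorPow C M (2 * i)}) :
    IsZero M := by
  have halve (i : ℕ) (hi : 1 ≤ i) (h2i : IsZero (tensorPow C M (2 * i))) :
      IsZero (tensorPow C M i) :=
    isZero_of_mem_thickTensorIdealClosure (by simpa using h2i) (h i hi)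
  have h1 : IsZero (tensorPow C M 1) :=
    Nat.of_two_mul_of_two_pow (P := fun i => IsZero (tensorPow C M i)) halve n
      (isZero_tensorPow_of_le h0 n.lt_two_pow_self.le)
  exact h1.of_iso (λ_ M).symm
end

section
/- Let k be a field of characteristic zero, T = k[[x,y]], R = k[[x,y,z]]/(x²y + z²), and M = (x,z) ⊆ R, identified inside the total quotient ring Q(R) via f ↦ f(x)/x. Then End_R(M) = Hom_R(M,R) = {a/x : az ∈ xR} = T + (z/x)T. -/
noncomputable section
set_option synthInstance.maxHeartbeats 1000000
set_option maxHeartbeats 1000000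

open MvPowerSeries

variable (k : Type*) [Field k] [CharZero k] [IsAlgClosed k]

/-- `S = k[[x,y,z]]`. -/
abbrev Sd := MvPowerSeries (Fin 3) k

/-- the defining equation `x²y + z²` of the `(D_∞)` singularity. -/
def fd : Sd k := (X 0 : Sd k) ^ 2 * X 1 + (X 2 : Sd k) ^ 2

/-- `R = k[[x,y,z]]/(x²y + z²)`, the two-dimensional `(D_∞)` hypersurface. -/
abbrev Rd := Sd k ⧸ Ideal.span {fd k}

/-- the quotient map `S → R`. -/
def mkd : Sd k →+* Rd k := Ideal.Quotient.mk _

def xd : Rd k := mkd k (X 0)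
def yd : Rd k := mkd k (X 1)
def zd : Rd k := mkd k (X 2)

/-- the total quotient ring `Q(R)`. -/
abbrev Qd := FractionRing (Rd k)

/-- the natural map `R → Q(R)`. -/
def ιd : Rd k →+* Qd k := algebraMap _ _

/-- the image in `Q(R)` of the maximal Cohen-Macaulay module `M = (x,z) ⊆ R`,
under the identification `f ↦ f(x)/x`. -/
def Md : Set (Qd k) :=
  (Submodule.map (Algebra.linearMap (Rd k) (Qd k))
    (Ideal.span {xd k, zd k}) : Submodule (Rd k) (Qd k))

/-- a power series in `x, y, z` which involves only `x` and `y` (i.e. lies in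
`T = k[[x,y]]`). -/
def NoZ (t : Sd k) : Prop :=
  ∀ m : Fin 3 →₀ ℕ, m 2 ≠ 0 → MvPowerSeries.coeff m t = 0

/-- `End_R(M)` identified with an `R`-submodule of `Q(R)` via `f ↦ f(x)/x`. -/
def Ed : Set (Qd k) := {q : Qd k | ∀ m ∈ Md k, q * m ∈ Md k}

/-- `Hom_R(M, R)` identified with an `R`-submodule of `Q(R)` via `f ↦ f(x)/x`. -/
def Hd : Set (Qd k) := {q : Qd k | ∀ m ∈ Md k, q * m ∈ Set.range (ιd k)}

/-!
`R` is a free `T`-module with basis `1, z`: Weierstrass division by `z² + x²y`, carried out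
coefficientwise, writes every element of `k[[x,y,z]]` uniquely as `(z² + x²y)H + t₁ + zt₂` with
`t₁, t₂ ∈ T`. If `qM ⊆ R`, then `a = qx` and `b = qz` satisfy `az = bx`. Writing `a = t₁ + zt₂`
and using `z² = -x²y`, we get `az = -x²yt₂ + zt₁ ∈ xR`, which by uniqueness forces `t₁ = xu`
with `u ∈ T`; hence `qx = xu + zt₂`. Conversely, if `qx = ux + zv` then `qz = uz - xyv`, so `q`
maps both generators of `M` into `M`.
-/

section

variable {k : Type*} [Field k]

def tri (a b c : ℕ) : Fin 3 →₀ ℕ :=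
  Finsupp.single 0 a + Finsupp.single 1 b + Finsupp.single 2 c

@[simp] lemma tri_apply_zero (a b c : ℕ) : tri a b c 0 = a := by simp [tri]
@[simp] lemma tri_apply_one (a b c : ℕ) : tri a b c 1 = b := by simp [tri]
@[simp] lemma tri_apply_two (a b c : ℕ) : tri a b c 2 = c := by simp [tri]

lemma eq_tri (m : Fin 3 →₀ ℕ) : m = tri (m 0) (m 1) (m 2) := by
  ext i; fin_cases i <;> simp

lemma tri_le_tri_iff {a b c a' b' c' : ℕ} :
    tri a b c ≤ tri a' b' c' ↔ a ≤ a' ∧ b ≤ b' ∧ c ≤ c' := by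
  refine ⟨fun h => ⟨by simpa using h 0, by simpa using h 1, by simpa using h 2⟩, ?_⟩
  rintro ⟨h₀, h₁, h₂⟩ i
  fin_cases i <;> simpa

lemma tri_sub_tri (a b c a' b' c' : ℕ) :
    tri a b c - tri a' b' c' = tri (a - a') (b - b') (c - c') := by
  ext i; fin_cases i <;> simp

lemma coeff_monomial_tri_mul (H : Sd k) (a b c a' b' c' : ℕ) :
    coeff (tri a b c) (monomial (tri a' b' c') 1 * H) =
      if a' ≤ a ∧ b' ≤ b ∧ c' ≤ c then coeff (tri (a - a') (b - b') (c - c')) H else 0 := by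
  simp only [coeff_monomial_mul, tri_le_tri_iff, tri_sub_tri, one_mul]

lemma X_two_eq : (X 2 : Sd k) = monomial (tri 0 0 1) 1 := by
  rw [X, show Finsupp.single 2 1 = tri 0 0 1 by ext i; fin_cases i <;> simp [tri]]

lemma fd_eq_monomial_add_monomial : fd k = monomial (tri 2 1 0) 1 + monomial (tri 0 0 2) 1 := by
  rw [fd, X_pow_eq, X_pow_eq, X, monomial_mul_monomial, one_mul,
    show Finsupp.single 0 2 + Finsupp.single 1 1 = tri 2 1 0 by ext i; fin_cases i <;> simp [tri],
    show Finsupp.single 2 2 = tri 0 0 2 by ext i; fin_cases i <;> simp [tri]]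

lemma coeff_X_two_mul_tri_zero (t : Sd k) (a b : ℕ) : coeff (tri a b 0) (X 2 * t) = 0 := by
  simp [X_two_eq, coeff_monomial_tri_mul]

lemma coeff_X_two_mul_tri_succ (t : Sd k) (a b c : ℕ) :
    coeff (tri a b (c + 1)) (X 2 * t) = coeff (tri a b c) t := by
  simp [X_two_eq, coeff_monomial_tri_mul]

lemma coeff_fd_mul_tri_add_two (H : Sd k) (a b c : ℕ) :
    coeff (tri a b (c + 2)) (fd k * H) = coeff (tri a b c) H +
      if 2 ≤ a ∧ 1 ≤ b then coeff (tri (a - 2) (b - 1) (c + 2)) H else 0 := by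
  simp [fd_eq_monomial_add_monomial, add_mul, coeff_monomial_tri_mul, add_comm]

variable (k) in
/-- `T = k[[x,y]]` inside `k[[x,y,z]]`. -/
def Td : Subring (Sd k) where
  carrier := {t | NoZ k t}
  zero_mem' _ _ := map_zero _
  one_mem' m hm := by
    rw [coeff_one, if_neg]
    rintro rfl
    exact hm rfl
  add_mem' {s t} (hs : NoZ k s) (ht : NoZ k t) m hm := by
    rw [map_add, hs m hm, ht m hm, add_zero]
  neg_mem' {t} (ht : NoZ k t) m hm := by
    rw [map_neg, ht m hm, neg_zero]
  mul_mem' {s t} (hs : NoZ k s) (ht : NoZ k t) m hm := by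
    rw [coeff_mul]
    refine Finset.sum_eq_zero fun ⟨p, q⟩ hpq => ?_
    rw [Finset.HasAntidiagonal.mem_antidiagonal] at hpq
    have : p 2 ≠ 0 ∨ q 2 ≠ 0 := by
      by_contra! h
      exact hm (by rw [← hpq, Finsupp.add_apply, h.1, h.2])
    rcases this with h | h
    · rw [hs p h, zero_mul]
    · rw [ht q h, mul_zero]

lemma X_mem_Td {i : Fin 3} (hi : i ≠ 2) : (X i : Sd k) ∈ Td k := by
  intro m hm
  rw [coeff_X, if_neg]
  rintro rfl
  exact hm (by simp [hi])

lemma X_zero_mem_Td : (X 0 : Sd k) ∈ Td k := X_mem_Td (by decide)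

lemma X_one_mem_Td : (X 1 : Sd k) ∈ Td k := X_mem_Td (by decide)

def zCoeff (n : ℕ) : Sd k →+ Sd k where
  toFun g m := if m 2 = 0 then coeff (tri (m 0) (m 1) n) g else 0
  map_zero' := funext fun m => by simp only [map_zero, ite_self]; rfl
  map_add' g g' := funext fun m => by
    change _ = (if m 2 = 0 then _ else (0 : k)) + (if m 2 = 0 then _ else 0)
    split_ifs <;> simp

lemma coeff_zCoeff (n : ℕ) (g : Sd k) (m : Fin 3 →₀ ℕ) :
    coeff m (zCoeff n g) = if m 2 = 0 then coeff (tri (m 0) (m 1) n) g else 0 :=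
  rfl

lemma zCoeff_mem_Td (n : ℕ) (g : Sd k) : zCoeff n g ∈ Td k := by
  intro m hm
  rw [coeff_zCoeff, if_neg hm]

lemma zCoeff_zero_add_X_two_mul {t₁ t₂ : Sd k} (ht₁ : t₁ ∈ Td k) :
    zCoeff 0 (t₁ + X 2 * t₂) = t₁ := by
  ext m
  rw [coeff_zCoeff]
  split_ifs with hm
  · rw [map_add, coeff_X_two_mul_tri_zero, add_zero, ← hm, ← eq_tri]
  · exact (ht₁ m hm).symm

lemma zCoeff_one_add_X_two_mul {t₁ t₂ : Sd k} (ht₁ : t₁ ∈ Td k) (ht₂ : t₂ ∈ Td k) :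
    zCoeff 1 (t₁ + X 2 * t₂) = t₂ := by
  ext m
  rw [coeff_zCoeff]
  split_ifs with hm
  · rw [map_add, ht₁ _ (by simp), coeff_X_two_mul_tri_succ, zero_add, ← hm, ← eq_tri]
  · exact (ht₂ m hm).symm

lemma zCoeff_zero_add_X_two_mul_zCoeff_one {g : Sd k}
    (hg : ∀ a b c, coeff (tri a b (c + 2)) g = 0) :
    zCoeff 0 g + X 2 * zCoeff 1 g = g := by
  ext m
  rw [eq_tri m, map_add]
  match m 2 with
  | 0 => simp [coeff_zCoeff, coeff_X_two_mul_tri_zero]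
  | 1 => simp [coeff_zCoeff, coeff_X_two_mul_tri_succ]
  | c + 2 => simp [coeff_zCoeff, coeff_X_two_mul_tri_succ, hg]

/-- The recursion `H(a,b,c) + H(a-2,b-1,c+2) = g(a,b,c+2)` says that `g - fd * H` has no
monomial divisible by `z²`; it determines the quotient `H` by induction on `a`. -/
def divCoeff (g : Sd k) (a b c : ℕ) : k :=
  coeff (tri a b (c + 2)) g -
    if h : 2 ≤ a ∧ 1 ≤ b then divCoeff g (a - 2) (b - 1) (c + 2) else 0
termination_by a
decreasing_by omega

def divQuot (g : Sd k) : Sd k := fun m => divCoeff g (m 0) (m 1) (m 2)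

lemma coeff_tri_divQuot (g : Sd k) (a b c : ℕ) :
    coeff (tri a b c) (divQuot g) = divCoeff g a b c := by
  show divCoeff g (tri a b c 0) (tri a b c 1) (tri a b c 2) = _
  simp

lemma coeff_tri_sub_fd_mul_divQuot (g : Sd k) (a b c : ℕ) :
    coeff (tri a b (c + 2)) (g - fd k * divQuot g) = 0 := by
  rw [map_sub, coeff_fd_mul_tri_add_two, sub_eq_zero]
  simp only [coeff_tri_divQuot]
  rw [divCoeff]
  split_ifs <;> ring

lemma exists_eq_fd_mul_add (g : Sd k) :
    ∃ H, ∃ t₁ ∈ Td k, ∃ t₂ ∈ Td k, g = fd k * H + t₁ + X 2 * t₂ := by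
  set r := g - fd k * divQuot g
  refine ⟨divQuot g, zCoeff 0 r, zCoeff_mem_Td 0 r, zCoeff 1 r, zCoeff_mem_Td 1 r, ?_⟩
  rw [add_assoc, zCoeff_zero_add_X_two_mul_zCoeff_one (coeff_tri_sub_fd_mul_divQuot g)]
  ring

lemma eq_zero_of_fd_mul_add_eq_zero {H t₁ t₂ : Sd k} (ht₁ : t₁ ∈ Td k) (ht₂ : t₂ ∈ Td k)
    (h : fd k * H + t₁ + X 2 * t₂ = 0) : H = 0 ∧ t₁ = 0 ∧ t₂ = 0 := by
  have hH : ∀ a b c, coeff (tri a b c) H = 0 := by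
    intro a
    induction a using Nat.strong_induction_on with
    | _ a ih =>
      intro b c
      have hc := congrArg (coeff (tri a b (c + 2))) h
      rw [map_add, map_add, coeff_fd_mul_tri_add_two, coeff_X_two_mul_tri_succ,
        ht₁ _ (by simp), ht₂ _ (by simp), map_zero] at hc
      split_ifs at hc with hab
      · simpa [ih (a - 2) (by omega)] using hc
      · simpa using hc
  obtain rfl : H = 0 := by
    ext m
    rw [eq_tri m, hH, map_zero]
  rw [mul_zero, zero_add] at h
  refine ⟨rfl, ?_, ?_⟩
  · rw [← zCoeff_zero_add_X_two_mul (t₂ := t₂) ht₁, h, map_zero]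
  · rw [← zCoeff_one_add_X_two_mul ht₁ ht₂, h, map_zero]

lemma mkd_fd : mkd k (fd k) = 0 :=
  Ideal.Quotient.eq_zero_iff_mem.mpr (Ideal.subset_span rfl)

variable (k) in
lemma zd_sq : zd k ^ 2 = -(xd k ^ 2 * yd k) := by
  have h : mkd k (X 0 ^ 2 * X 1 + X 2 ^ 2) = 0 := mkd_fd
  rw [map_add, map_mul, map_pow, map_pow] at h
  exact eq_neg_of_add_eq_zero_right h

lemma exists_eq_mkd_add_zd_mul (r : Rd k) :
    ∃ t₁ ∈ Td k, ∃ t₂ ∈ Td k, r = mkd k t₁ + zd k * mkd k t₂ := by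
  obtain ⟨g, rfl⟩ := Ideal.Quotient.mk_surjective r
  obtain ⟨H, t₁, ht₁, t₂, ht₂, rfl⟩ := exists_eq_fd_mul_add g
  refine ⟨t₁, ht₁, t₂, ht₂, ?_⟩
  change mkd k _ = _
  rw [map_add, map_add, map_mul, mkd_fd, zero_mul, zero_add, map_mul, zd]

lemma eq_of_mkd_add_zd_mul_eq {t₁ t₂ s₁ s₂ : Sd k} (ht₁ : t₁ ∈ Td k) (ht₂ : t₂ ∈ Td k)
    (hs₁ : s₁ ∈ Td k) (hs₂ : s₂ ∈ Td k)
    (h : mkd k t₁ + zd k * mkd k t₂ = mkd k s₁ + zd k * mkd k s₂) : t₁ = s₁ ∧ t₂ = s₂ := by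
  have hmem : (t₁ - s₁) + X 2 * (t₂ - s₂) ∈ Ideal.span {fd k} := by
    rw [← Ideal.Quotient.eq_zero_iff_mem]
    change mkd k _ = 0
    rw [map_add, map_mul, map_sub, map_sub, ← zd]
    linear_combination h
  obtain ⟨H, hH⟩ := Ideal.mem_span_singleton'.mp hmem
  obtain ⟨-, h₁, h₂⟩ := eq_zero_of_fd_mul_add_eq_zero (H := -H)
    (sub_mem ht₁ hs₁) (sub_mem ht₂ hs₂) (by rw [add_assoc, ← hH]; ring)
  exact ⟨sub_eq_zero.mp h₁, sub_eq_zero.mp h₂⟩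

lemma xd_mem_nonZeroDivisors : xd k ∈ nonZeroDivisors (Rd k) := by
  rw [mem_nonZeroDivisors_iff_right]
  intro r hr
  obtain ⟨t₁, ht₁, t₂, ht₂, rfl⟩ := exists_eq_mkd_add_zd_mul r
  obtain ⟨h₁, h₂⟩ := eq_of_mkd_add_zd_mul_eq (mul_mem X_zero_mem_Td ht₁)
    (mul_mem X_zero_mem_Td ht₂) (zero_mem _) (zero_mem _)
    (by rw [map_mul, map_mul, map_zero, ← xd]; linear_combination hr)
  have hX : (X 0 : Sd k) ∈ nonZeroDivisors (Sd k) := X_mem_nonzeroDivisors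
  rw [(mul_left_mem_nonZeroDivisors_eq_zero_iff hX).mp h₁,
    (mul_left_mem_nonZeroDivisors_eq_zero_iff hX).mp h₂, map_zero, mul_zero, add_zero]

lemma exists_X_zero_mul_eq_of_xd_dvd {s₁ s₂ : Sd k} (hs₁ : s₁ ∈ Td k) (hs₂ : s₂ ∈ Td k)
    (h : xd k ∣ mkd k s₁ + zd k * mkd k s₂) : ∃ u ∈ Td k, X 0 * u = s₂ := by
  obtain ⟨r, hr⟩ := h
  obtain ⟨t₁, ht₁, t₂, ht₂, rfl⟩ := exists_eq_mkd_add_zd_mul r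
  obtain ⟨-, h₂⟩ := eq_of_mkd_add_zd_mul_eq (mul_mem X_zero_mem_Td ht₁)
    (mul_mem X_zero_mem_Td ht₂) hs₁ hs₂
    (by rw [map_mul, map_mul, ← xd, hr]; ring)
  exact ⟨t₂, ht₂, h₂⟩

lemma isUnit_ιd_xd : IsUnit (ιd k (xd k)) :=
  IsLocalization.map_units (Qd k) (⟨xd k, xd_mem_nonZeroDivisors⟩ : nonZeroDivisors (Rd k))

lemma mem_Md_iff {q : Qd k} : q ∈ Md k ↔ ∃ a ∈ Ideal.span {xd k, zd k}, ιd k a = q :=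
  Iff.rfl

variable (k) in
/-- `{a/x : az ∈ xR}`, with `q = a/x` encoded as `q * x = a`. -/
def xColonZDivX : Set (Qd k) :=
  {q | ∃ a : Rd k, q * ιd k (xd k) = ιd k a ∧ a * zd k ∈ Ideal.span {xd k}}

variable (k) in
/-- `T + (z/x)T`, with `q = t₁ + (z/x)t₂` encoded as `q * x = t₁x + zt₂`. -/
def tAddZDivXT : Set (Qd k) :=
  {q | ∃ t₁ t₂ : Sd k, NoZ k t₁ ∧ NoZ k t₂ ∧
    q * ιd k (xd k) = ιd k (mkd k (t₁ * X 0 + X 2 * t₂))}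

lemma Ed_subset_Hd : Ed k ⊆ Hd k := fun _ hq m hm =>
  let ⟨a, _, ha⟩ := mem_Md_iff.mp (hq m hm)
  ⟨a, ha⟩

lemma Hd_subset_xColonZDivX : Hd k ⊆ xColonZDivX k := by
  intro q hq
  obtain ⟨a, ha⟩ := hq _ (mem_Md_iff.mpr ⟨xd k, Ideal.subset_span (by simp), rfl⟩)
  obtain ⟨b, hb⟩ := hq _ (mem_Md_iff.mpr ⟨zd k, Ideal.subset_span (by simp), rfl⟩)
  refine ⟨a, ha.symm, Ideal.mem_span_singleton'.mpr ⟨b, ?_⟩⟩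
  apply IsFractionRing.injective (Rd k) (Qd k)
  change ιd k (b * xd k) = ιd k (a * zd k)
  rw [map_mul, map_mul, hb, ha]
  ring

lemma xColonZDivX_subset_tAddZDivXT : xColonZDivX k ⊆ tAddZDivXT k := by
  rintro q ⟨a, hqa, haz⟩
  obtain ⟨t₁, ht₁, t₂, ht₂, rfl⟩ := exists_eq_mkd_add_zd_mul a
  have hdvd : xd k ∣ mkd k (-(X 0 ^ 2 * X 1 * t₂)) + zd k * mkd k t₁ := by
    rw [← Ideal.mem_span_singleton]
    convert haz using 1
    rw [map_neg, map_mul, map_mul, map_pow, ← xd, ← yd]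
    linear_combination (-mkd k t₂) * zd_sq k
  obtain ⟨u, hu, rfl⟩ := exists_X_zero_mul_eq_of_xd_dvd (neg_mem (mul_mem (mul_mem
    (pow_mem X_zero_mem_Td 2) X_one_mem_Td) ht₂)) ht₁ hdvd
  refine ⟨u, t₂, hu, ht₂, ?_⟩
  rw [hqa, zd, ← map_mul, ← map_add, mul_comm u]

lemma mem_Ed_of_mul_ιd_xd_eq {q : Qd k} (u v : Rd k)
    (hq : q * ιd k (xd k) = ιd k (u * xd k + zd k * v)) : q ∈ Ed k := by
  have hqz : q * ιd k (zd k) = ιd k (u * zd k - xd k * yd k * v) := by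
    refine isUnit_ιd_xd.mul_right_cancel ?_
    rw [mul_right_comm, hq, ← map_mul, ← map_mul]
    congr 1
    linear_combination v * zd_sq k
  have ha : u * xd k + zd k * v ∈ Ideal.span {xd k, zd k} :=
    Ideal.mem_span_pair.mpr ⟨u, v, by ring⟩
  have hb : u * zd k - xd k * yd k * v ∈ Ideal.span {xd k, zd k} :=
    Ideal.mem_span_pair.mpr ⟨-(yd k * v), u, by ring⟩
  intro m hm
  obtain ⟨c, hc, rfl⟩ := mem_Md_iff.mp hm
  obtain ⟨r, s, rfl⟩ := Ideal.mem_span_pair.mp hc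
  refine mem_Md_iff.mpr ⟨_, add_mem (Ideal.mul_mem_left _ r ha) (Ideal.mul_mem_left _ s hb), ?_⟩
  rw [map_add, map_mul, map_mul, ← hq, ← hqz, map_add, map_mul, map_mul]
  ring

lemma tAddZDivXT_subset_Ed : tAddZDivXT k ⊆ Ed k := by
  rintro q ⟨t₁, t₂, -, -, hq⟩
  refine mem_Ed_of_mul_ιd_xd_eq (mkd k t₁) (mkd k t₂) ?_
  rw [hq, map_add, map_mul, map_mul, ← xd, ← zd]

end

/-- For the `(D_∞)` hypersurface `R = k[[x,y,z]]/(x²y + z²)` and `M = (x,z) ⊆ R`,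
identified inside `Q(R)` via `f ↦ f(x)/x`:
`End_R(M) = Hom_R(M,R) = {a/x : az ∈ xR} = T + (z/x)T` where `T = k[[x,y]]`.
(An element `q ∈ Q(R)` equals `a/x` iff `q·x = a`, and equals `t₁ + (z/x)t₂`
iff `q·x = t₁x + z·t₂`, since `x` is invertible in `Q(R)`.) -/
theorem stmt12 :
    Ed k = Hd k ∧
    Hd k = {q : Qd k | ∃ a : Rd k,
      q * ιd k (xd k) = ιd k a ∧ a * zd k ∈ Ideal.span {xd k}} ∧
    Hd k = {q : Qd k | ∃ t₁ t₂ : Sd k, NoZ k t₁ ∧ NoZ k t₂ ∧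
      q * ιd k (xd k) = ιd k (mkd k (t₁ * X 0 + X 2 * t₂))} := by
  have hE : Ed k ⊆ Hd k := Ed_subset_Hd
  have hH : Hd k ⊆ xColonZDivX k := Hd_subset_xColonZDivX
  have hC : xColonZDivX k ⊆ tAddZDivXT k := xColonZDivX_subset_tAddZDivXT
  have hT : tAddZDivXT k ⊆ Ed k := tAddZDivXT_subset_Ed
  exact ⟨hE.antisymm (hH.trans (hC.trans hT)), hH.antisymm (hC.trans (hT.trans hE)),
    (hH.trans hC).antisymm (hT.trans hE)⟩

end
end

section
/- With R = k[[x,y,z]]/(x²y + z²) and M = (x,z)R identified inside Q(R) as in the (D_∞) computation, the submodule P_R(M,M) of endomorphisms of M factoring through a free R-module equals M itself (under the identification End_R(M) = T + (z/x)T ⊆ Q(R)). -/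
/-!
A fraction `α` with `α M ⊆ R` sends `x, z` to `a, b ∈ R` with `x b = z a`. Lifting to
`k[[x,y,z]]`, this reads `z (A - g z) = x (B + g x y)` for some `g`, and since `x` and `z`
are non-associated primes, `A, B ∈ (x, z)`. So `α M ⊆ M`, whence every `β α` with `β ∈ M`
lies in `M`; conversely `β = β · 1` with `1` the inclusion `M ⊆ R`.
-/

noncomputable section
set_option synthInstance.maxHeartbeats 1000000
set_option maxHeartbeats 1000000

open MvPowerSeries

variable (k : Type*) [Field k] [CharZero k] [IsAlgClosed k]

/-- The endomorphisms of `M` factoring through a free `R`-module, identified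
inside `Q(R)`: finite sums of composites `β ∘ α` with `α ∈ Hom_R(M,R)` and
`β ∈ M ≅ Hom_R(R,M)`, i.e. finite sums `∑ βᵢ·αᵢ` with `αᵢ ∈ H`, `βᵢ ∈ M`. -/
def Pd : Set (Qd k) :=
  {q : Qd k | ∃ (r : ℕ) (α β : Fin r → Qd k),
    (∀ i, α i ∈ Hd k) ∧ (∀ i, β i ∈ Md k) ∧ q = ∑ i, β i * α i}

theorem MvPowerSeries.prime_X {σ R : Type*} [CommRing R] [IsDomain R] (s : σ) :
    Prime (X s : MvPowerSeries σ R) := by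
  classical
  have := NoZeroDivisors.to_isDomain (MvPowerSeries {t // t ≠ s} R)
  let e := (renameEquiv R (Equiv.optionSubtypeNe s).symm).trans (optionEquivLeft {t // t ≠ s} R)
  have he : e (X s) = PowerSeries.X := by simp [e, renameEquiv]
  rw [← MulEquiv.prime_iff e, he]
  exact PowerSeries.X_prime

theorem MvPowerSeries.X_dvd_X_iff {σ R : Type*} [CommSemiring R] [Nontrivial R] {s t : σ} :
    (X s : MvPowerSeries σ R) ∣ X t ↔ s = t := by
  classical
  refine ⟨fun h => ?_, fun h => h ▸ dvd_rfl⟩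
  by_contra hst
  have := X_dvd_iff.mp h (Finsupp.single t 1) (by simp [Ne.symm hst])
  simp [coeff_X] at this

section

variable {S : Type*} [CommRing S]

theorem Ideal.exists_eq_mul_add_mul_of_mem_span_pair_mul {p q x : S}
    (hx : x ∈ span {p, q} * span {p, q}) :
    ∃ c ∈ span {p, q}, ∃ d ∈ span {p, q}, x = p * c + q * d := by
  rw [← Set.singleton_union, span_union, sup_mul, ← span_union, Set.singleton_union,
    Submodule.mem_sup] at hx
  obtain ⟨_, hpc, _, hqd, rfl⟩ := hx
  obtain ⟨c, hc, rfl⟩ := mem_span_singleton_mul.mp hpc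
  obtain ⟨d, hd, rfl⟩ := mem_span_singleton_mul.mp hqd
  exact ⟨c, hc, d, hd, rfl⟩

theorem mem_span_pair_of_mul_sub_mul_mem {p q A B : S} (hp : Prime p) (hpq : ¬ p ∣ q)
    (h : q * A - p * B ∈ Ideal.span {p, q} * Ideal.span {p, q}) : A ∈ Ideal.span {p, q} := by
  obtain ⟨c, -, d, hd, hcd⟩ := Ideal.exists_eq_mul_add_mul_of_mem_span_pair_mul h
  have hrel : q * (A - d) = p * (B + c) := by linear_combination hcd
  have hdvd : p ∣ A - d := (hp.dvd_or_dvd ⟨B + c, hrel⟩).resolve_left hpq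
  have hp_mem : p ∈ Ideal.span {p, q} := Ideal.subset_span (Set.mem_insert p _)
  simpa using Ideal.add_mem _ (Ideal.mem_of_dvd _ hdvd hp_mem) hd

theorem mem_span_pair_of_mk_mul_eq_mk_mul {J : Ideal S} {p q : S} (hp : Prime p) (hq : Prime q)
    (hpq : ¬ p ∣ q) (hqp : ¬ q ∣ p) (hJ : J ≤ Ideal.span {p, q} * Ideal.span {p, q})
    {a b : S ⧸ J}
    (h : Ideal.Quotient.mk J p * b = Ideal.Quotient.mk J q * a) :
    a ∈ Ideal.span {Ideal.Quotient.mk J p, Ideal.Quotient.mk J q} ∧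
      b ∈ Ideal.span {Ideal.Quotient.mk J p, Ideal.Quotient.mk J q} := by
  obtain ⟨A, rfl⟩ := Ideal.Quotient.mk_surjective a
  obtain ⟨B, rfl⟩ := Ideal.Quotient.mk_surjective b
  have hAB : q * A - p * B ∈ Ideal.span {p, q} * Ideal.span {p, q} :=
    hJ (Ideal.Quotient.eq.mp (by simpa only [map_mul] using h.symm))
  have hmk {C : S} (hC : C ∈ Ideal.span {p, q}) :
      Ideal.Quotient.mk J C ∈ Ideal.span {Ideal.Quotient.mk J p, Ideal.Quotient.mk J q} := by
    simpa only [Ideal.map_span, Set.image_pair] using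
      Ideal.mem_map_of_mem (Ideal.Quotient.mk J) hC
  refine ⟨hmk (mem_span_pair_of_mul_sub_mul_mem hp hpq hAB), hmk ?_⟩
  rw [Set.pair_comm] at hAB ⊢
  exact mem_span_pair_of_mul_sub_mul_mem hq hqp (by simpa using neg_mem hAB)

end

theorem mul_mem_map_span_pair {R K : Type*} [CommRing R] [CommRing K] [Algebra R K]
    (hinj : Function.Injective (algebraMap R K)) {x z : R}
    (hxz : ∀ a b : R, x * b = z * a → a ∈ Ideal.span {x, z} ∧ b ∈ Ideal.span {x, z})
    {q : K} (hq : ∀ m ∈ Submodule.map (Algebra.linearMap R K) (Ideal.span {x, z}),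
      q * m ∈ Set.range (algebraMap R K)) :
    ∀ m ∈ Submodule.map (Algebra.linearMap R K) (Ideal.span {x, z}),
      q * m ∈ Submodule.map (Algebra.linearMap R K) (Ideal.span {x, z}) := by
  set M := Submodule.map (Algebra.linearMap R K) (Ideal.span {x, z})
  suffices M ≤ M.comap (LinearMap.mulLeft R q) from fun m hm => this hm
  have hx : x ∈ Ideal.span {x, z} := Ideal.subset_span (Set.mem_insert x _)
  have hz : z ∈ Ideal.span {x, z} := Ideal.subset_span (Set.mem_insert_of_mem x rfl)
  obtain ⟨a, ha⟩ := hq _ (Submodule.mem_map_of_mem hx)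
  obtain ⟨b, hb⟩ := hq _ (Submodule.mem_map_of_mem hz)
  have hab : x * b = z * a := hinj <| by
    simp only [map_mul, ha, hb, Algebra.linearMap_apply]
    ring
  obtain ⟨haI, hbI⟩ := hxz a b hab
  rw [Submodule.map_le_iff_le_comap, Ideal.span, Submodule.span_le, Set.pair_subset_iff]
  constructor
  · change q * _ ∈ M
    rw [← ha]
    exact Submodule.mem_map_of_mem haI
  · change q * _ ∈ M
    rw [← hb]
    exact Submodule.mem_map_of_mem hbI

theorem mem_span_of_xd_mul_eq_zd_mul {F : Type*} [Field F] {a b : Rd F}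
    (h : xd F * b = zd F * a) :
    a ∈ Ideal.span {xd F, zd F} ∧ b ∈ Ideal.span {xd F, zd F} := by
  have hf : fd F ∈ Ideal.span {(X 0 : Sd F), X 2} * Ideal.span {(X 0 : Sd F), X 2} := by
    have h0 : (X 0 : Sd F) ∈ Ideal.span {X 0, X 2} := Ideal.subset_span (Set.mem_insert _ _)
    have h2 : (X 2 : Sd F) ∈ Ideal.span {X 0, X 2} :=
      Ideal.subset_span (Set.mem_insert_of_mem _ rfl)
    rw [fd, pow_two, pow_two, mul_assoc]
    exact add_mem (Ideal.mul_mem_mul h0 (Ideal.mul_mem_right _ _ h0)) (Ideal.mul_mem_mul h2 h2)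
  exact mem_span_pair_of_mk_mul_eq_mk_mul (prime_X 0) (prime_X 2)
    (by rw [X_dvd_X_iff]; decide) (by rw [X_dvd_X_iff]; decide)
    ((Ideal.span_singleton_le_iff_mem _).mpr hf) h

/-- For `R = k[[x,y,z]]/(x²y + z²)` and `M = (x,z)R`, the submodule
`P_R(M,M)` of endomorphisms factoring through a free `R`-module equals `M`
itself, under the identification `End_R(M) ⊆ Q(R)`. -/
theorem stmt13 : Pd k = Md k := by
  have one_mem_Hd : (1 : Qd k) ∈ Hd k := by
    rintro m ⟨w, -, rfl⟩
    exact ⟨w, (one_mul _).symm⟩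
  have mul_mem_Md {α β : Qd k} (hα : α ∈ Hd k) (hβ : β ∈ Md k) : β * α ∈ Md k :=
    mul_comm α β ▸ mul_mem_map_span_pair (IsFractionRing.injective (Rd k) (Qd k))
      (fun _ _ => mem_span_of_xd_mul_eq_zd_mul) hα β hβ
  refine Set.Subset.antisymm ?_ fun q hq => ⟨1, fun _ => 1, fun _ => q, fun _ => one_mem_Hd,
    fun _ => hq, by simp⟩
  rintro q ⟨r, α, β, hα, hβ, rfl⟩
  exact Submodule.sum_mem _ fun i _ => mul_mem_Md (hα i) (hβ i)

end
end
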